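/- Let m ≥ 1. For X ∈ ℍ^m and purely imaginary Z ∈ ℍ, let M(X,Z) be the (m+2)×(m+2) quaternion matrix in block form M(X,Z) = [[1 + ‖X‖²/8 + Z/2, −X*/2, ‖X‖²/8 + Z/2], [−X/2, I_m, −X/2], [−‖X‖²/8 − Z/2, X*/2, 1 − ‖X‖²/8 − Z/2]], and let J be the block-diagonal matrix diag(−1, I_m, 1). Then M(X,Z)ᴴ · J · M(X,Z) = J, where M ᴴ denotes the quaternionic conjugate transpose, (Mᴴ)ᵢⱼ = (Mⱼᵢ)*. (That is, M(X,Z) preserves the sesquilinear form q(z,w) = −z̄₀w₀ + Σⱼ₌₁ᵐ⁺¹ z̄ⱼwⱼ, so M(X,Z) ∈ Sp(m+1, 1).) -/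

import Mathlib

open Quaternion Matrix

noncomputable section

/-- The index type for `(m+2) × (m+2)` matrices in `(1, m, 1)` block form. -/
abbrev Idx (m : ℕ) := Unit ⊕ Fin m ⊕ Unit

/-- The group element `M(X,Z)`:
`[[1 + ‖X‖²/8 + Z/2, -X*/2, ‖X‖²/8 + Z/2], [-X/2, I, -X/2],
  [-‖X‖²/8 - Z/2, X*/2, 1 - ‖X‖²/8 - Z/2]]`, where `‖X‖² = ∑ⱼ |Xⱼ|²`. -/
def matM (m : ℕ) (X : Fin m → Quaternion ℝ) (Z : Quaternion ℝ) :
    Matrix (Idx m) (Idx m) (Quaternion ℝ) :=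
  Matrix.of fun i j =>
    match i, j with
    | Sum.inl _, Sum.inl _ =>
        1 + (((∑ k, Quaternion.normSq (X k)) / 8 : ℝ) : Quaternion ℝ) + Z / 2
    | Sum.inl _, Sum.inr (Sum.inl k) => -star (X k) / 2
    | Sum.inl _, Sum.inr (Sum.inr _) =>
        (((∑ k, Quaternion.normSq (X k)) / 8 : ℝ) : Quaternion ℝ) + Z / 2
    | Sum.inr (Sum.inl k), Sum.inl _ => -X k / 2
    | Sum.inr (Sum.inl k), Sum.inr (Sum.inl l) => if k = l then 1 else 0
    | Sum.inr (Sum.inl k), Sum.inr (Sum.inr _) => -X k / 2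
    | Sum.inr (Sum.inr _), Sum.inl _ =>
        -(((∑ k, Quaternion.normSq (X k)) / 8 : ℝ) : Quaternion ℝ) - Z / 2
    | Sum.inr (Sum.inr _), Sum.inr (Sum.inl k) => star (X k) / 2
    | Sum.inr (Sum.inr _), Sum.inr (Sum.inr _) =>
        1 - (((∑ k, Quaternion.normSq (X k)) / 8 : ℝ) : Quaternion ℝ) - Z / 2

/-- The block-diagonal matrix `J = diag(-1, I_m, 1)` defining the sesquilinear form
`q(z,w) = -z̄₀w₀ + ∑ⱼ z̄ⱼwⱼ`. -/
def matJ (m : ℕ) : Matrix (Idx m) (Idx m) (Quaternion ℝ) :=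
  Matrix.of fun i j =>
    match i, j with
    | Sum.inl _, Sum.inl _ => -1
    | Sum.inr (Sum.inl k), Sum.inr (Sum.inl l) => if k = l then 1 else 0
    | Sum.inr (Sum.inr _), Sum.inr (Sum.inr _) => 1
    | _, _ => 0

/-
With `a = ‖X‖²/8 + Z/2` and `y = X/2`, the matrix `M(X,Z)` has blocks
`[[1 + a, -y*, a], [-y, I, -y], [-a, y*, 1 - a]]`. Each entry of `Mᴴ J M` is then a
noncommutative polynomial in `a, a*, yₖ, yₖ*` which reduces to the corresponding entry of
`J` once `a* + a` is replaced by `∑ₖ yₖ* yₖ = ‖X‖²/4`, and that replacement is legitimate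
exactly because `Re Z = 0`.
-/

theorem div_two_eq_smul (x : Quaternion ℝ) : x / 2 = (2⁻¹ : ℝ) • x := by
  rw [div_eq_mul_inv, ← mul_coe_eq_smul, coe_inv]
  rfl

theorem star_div_two (x : Quaternion ℝ) : star (x / 2) = star x / 2 := by
  rw [div_two_eq_smul, div_two_eq_smul, Quaternion.star_smul]

theorem star_div_two_mul_div_two (x : Quaternion ℝ) :
    star (x / 2) * (x / 2) = ((normSq x / 4 : ℝ) : Quaternion ℝ) := by
  rw [div_two_eq_smul, Quaternion.star_smul, smul_mul_smul_comm, star_mul_self, smul_coe]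
  congr 1
  ring

section

variable {m : ℕ}

def heisenbergMatrix (a : Quaternion ℝ) (y : Fin m → Quaternion ℝ) :
    Matrix (Idx m) (Idx m) (Quaternion ℝ) :=
  Matrix.of fun i j =>
    match i, j with
    | Sum.inl _, Sum.inl _ => 1 + a
    | Sum.inl _, Sum.inr (Sum.inl k) => -star (y k)
    | Sum.inl _, Sum.inr (Sum.inr _) => a
    | Sum.inr (Sum.inl k), Sum.inl _ => -y k
    | Sum.inr (Sum.inl k), Sum.inr (Sum.inl l) => if k = l then 1 else 0
    | Sum.inr (Sum.inl k), Sum.inr (Sum.inr _) => -y k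
    | Sum.inr (Sum.inr _), Sum.inl _ => -a
    | Sum.inr (Sum.inr _), Sum.inr (Sum.inl k) => star (y k)
    | Sum.inr (Sum.inr _), Sum.inr (Sum.inr _) => 1 - a

theorem conjTranspose_mul_matJ_mul_apply (A : Matrix (Idx m) (Idx m) (Quaternion ℝ))
    (i j : Idx m) :
    (Aᴴ * matJ m * A) i j =
      -(star (A (Sum.inl ()) i) * A (Sum.inl ()) j)
        + ∑ k, star (A (Sum.inr (Sum.inl k)) i) * A (Sum.inr (Sum.inl k)) j
        + star (A (Sum.inr (Sum.inr ())) i) * A (Sum.inr (Sum.inr ())) j := by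
  simp [Matrix.mul_apply, Fintype.sum_sum_type, matJ, add_assoc]

theorem heisenbergMatrix_conjTranspose_mul_matJ_mul {a : Quaternion ℝ}
    {y : Fin m → Quaternion ℝ} (h : star a + a = ∑ k, star (y k) * y k) :
    (heisenbergMatrix a y)ᴴ * matJ m * heisenbergMatrix a y = matJ m := by
  refine Matrix.ext fun i j => ?_
  rw [conjTranspose_mul_matJ_mul_apply]
  rcases i with _ | i | _ <;> rcases j with _ | j | _ <;>
    simp only [heisenbergMatrix, matJ, of_apply, ← h, star_add, star_sub, star_neg, star_one,
      star_zero, star_star, apply_ite star, neg_mul, mul_neg, neg_neg, mul_ite, ite_mul, mul_one,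
      mul_zero, one_mul, zero_mul, Finset.sum_neg_distrib, Finset.sum_ite_eq, Finset.mem_univ,
      ↓reduceIte, eq_comm, neg_add_cancel_comm] <;>
    noncomm_ring

theorem sum_star_div_two_mul_div_two (X : Fin m → Quaternion ℝ) :
    ∑ k, star (X k / 2) * (X k / 2) = (((∑ k, normSq (X k)) / 4 : ℝ) : Quaternion ℝ) := by
  simp only [star_div_two_mul_div_two, Finset.sum_div]
  exact (map_sum (algebraMap ℝ (Quaternion ℝ)) _ _).symm

theorem matM_eq_heisenbergMatrix (X : Fin m → Quaternion ℝ) (Z : Quaternion ℝ) :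
    matM m X Z =
      heisenbergMatrix ((((∑ k, normSq (X k)) / 8 : ℝ) : Quaternion ℝ) + Z / 2)
        (fun k => X k / 2) := by
  refine Matrix.ext fun i j => ?_
  rcases i with _ | i | _ <;> rcases j with _ | j | _ <;>
    simp only [matM, heisenbergMatrix, of_apply, add_assoc, neg_add', sub_sub, neg_div,
      star_div_two]

theorem star_add_self_normSq_div_eight_add_div_two (X : Fin m → Quaternion ℝ)
    {Z : Quaternion ℝ} (hZ : Z.re = 0) :
    star ((((∑ k, normSq (X k)) / 8 : ℝ) : Quaternion ℝ) + Z / 2)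
      + ((((∑ k, normSq (X k)) / 8 : ℝ) : Quaternion ℝ) + Z / 2)
      = ∑ k, star (X k / 2) * (X k / 2) := by
  rw [star_add_self', sum_star_div_two_mul_div_two, div_two_eq_smul]
  congr 1
  simp only [re_add, re_coe, re_smul, hZ, smul_eq_mul, mul_zero, add_zero]
  ring

end

theorem stmt_5_general (m : ℕ) (X : Fin m → Quaternion ℝ) (Z : Quaternion ℝ)
    (hZ : Z.re = 0) :
    (matM m X Z)ᴴ * matJ m * matM m X Z = matJ m := by
  rw [matM_eq_heisenbergMatrix]
  exact heisenbergMatrix_conjTranspose_mul_matJ_mul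
    (star_add_self_normSq_div_eight_add_div_two X hZ)

/-- `M(X,Z)ᴴ · J · M(X,Z) = J`, i.e. `M(X,Z)` preserves the
sesquilinear form `q`, so `M(X,Z) ∈ Sp(m+1, 1)`. -/
theorem stmt_5 (m : ℕ) (hm : 1 ≤ m) (X : Fin m → Quaternion ℝ) (Z : Quaternion ℝ)
    (hZ : Z.re = 0) :
    (matM m X Z)ᴴ * matJ m * matM m X Z = matJ m :=
  stmt_5_general m X Z hZ
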